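/- If a derivation of an attributed tree transducer on input s contains a productive cycle — i.e., there are indices i < j with t_i ≠ t_j and an attribute occurrence α(ν) occurring in both t_i and t_j, where t_j is obtained from t_i by rewriting only at positions below the occurrence of α(ν) and the rewriting strictly grows the tree — then by pumping, the transducer produces infinitely many distinct output trees on input s; hence a functional attributed tree transducer admits no productive cycles on inputs in its domain. -/

import Mathlib

universe u

inductive RTree (α : Type u) : Type u
  | node : α → List (RTree α) → RTree α

namespace RTree

theorem sizeOf_lt_of_mem {α : Type u} [SizeOf α] {t : RTree α} {ts : List (RTree α)}
    (h : t ∈ ts) : sizeOf t < 1 + sizeOf ts := by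
  have := List.sizeOf_lt_of_mem h
  omega

def size {α : Type u} : RTree α → ℕ
  | .node _ ts => 1 + (ts.attach.map (fun x => size x.1)).sum
decreasing_by
  simp only [node.sizeOf_spec]
  have := List.sizeOf_lt_of_mem x.2
  omega

def height {α : Type u} : RTree α → ℕ
  | .node _ ts => (ts.attach.map (fun x => height x.1 + 1)).foldr max 0
decreasing_by
  simp only [node.sizeOf_spec]
  have := List.sizeOf_lt_of_mem x.2
  omega

def rootLabel {α : Type u} : RTree α → α
  | .node a _ => a

def tmap {α β : Type u} (f : α → β) : RTree α → RTree β
  | .node a ts => .node (f a) (ts.attach.map (fun x => tmap f x.1))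
decreasing_by
  simp only [node.sizeOf_spec]
  have := List.sizeOf_lt_of_mem x.2
  omega

def subtreeAt {α : Type u} : RTree α → List ℕ → Option (RTree α)
  | t, [] => some t
  | .node _ ts, i :: u =>
    match ts[i - 1]? with
    | some t' => if 1 ≤ i then subtreeAt t' u else none
    | none => none

def replaceAt {α : Type u} : RTree α → List ℕ → RTree α → RTree α
  | _, [], t' => t'
  | .node a ts, i :: u, t' =>
      .node a (ts.set (i - 1)
        (match ts[i - 1]? with
         | some ti => replaceAt ti u t'
         | none => .node a []))

def nodesList {α : Type u} : RTree α → List (List ℕ)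
  | .node _ ts =>
      [] :: (((ts.attach.map (fun x => nodesList x.1)).zipIdx.map (fun q => (q.2, q.1))).flatMap
        fun p => p.2.map fun u => (p.1 + 1) :: u)
decreasing_by
  simp only [node.sizeOf_spec]
  have := List.sizeOf_lt_of_mem x.2
  omega

def nodeSet {α : Type u} (t : RTree α) : Set (List ℕ) := {v | (t.subtreeAt v).isSome}

inductive WellRanked {α : Type u} (rank : α → ℕ) : RTree α → Prop
  | node (a : α) (ts : List (RTree α)) :
      ts.length = rank a → (∀ t ∈ ts, WellRanked rank t) → WellRanked rank (.node a ts)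

inductive Monadic {α : Type u} : RTree α → Prop
  | node (a : α) (ts : List (RTree α)) :
      ts.length ≤ 1 → (∀ t ∈ ts, Monadic t) → Monadic (.node a ts)

end RTree
open RTree in
/-- Right-hand sides of rules: trees over output symbols `Δ` with leaves of the form
`a'(π i)` (coded `Sum.inr (Sum.inl (a', i))`) or `b'(π)` (coded `Sum.inr (Sum.inr b')`). -/
abbrev RHS (S I Δ : Type) := RTree (Δ ⊕ (S × ℕ ⊕ I))

/-- Sentential forms: trees over `Δ` with leaves labelled by attribute occurrences `α(v)`. -/
abbrev SForm (S I Δ : Type) := RTree (Δ ⊕ ((S ⊕ I) × List ℕ))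

/-- An attributed tree transducer with synthesized attributes `S`, inherited attributes `I`,
input alphabet `Sg`, output alphabet `Δ`, initial attribute `init` and rule sets; `rootI`
are the rules for the root marker `#` (which has only inherited rules `b(π1) → ξ`). -/
structure ATT (S I Sg Δ : Type) where
  init : S
  ruleS : Sg → S → Set (RHS S I Δ)
  ruleI : Sg → I → ℕ → Set (RHS S I Δ)
  rootI : I → Set (RHS S I Δ)

namespace ATT

variable {S I Sg Δ : Type}

/-- The labelling function of `#(s)`: the root `[]` is labelled by `#` (coded `none`),
and the node `1·v` is labelled by the label of `v` in `s`. -/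
def labelHash (s : RTree Sg) : List ℕ → Option (Option Sg)
  | [] => some none
  | i :: v => if i = 1 then (s.subtreeAt v).map (fun t => some t.rootLabel) else none

/-- The labelling function of plain `s` (no root marker). -/
def labelPlain (s : RTree Sg) : List ℕ → Option (Option Sg) :=
  fun v => (s.subtreeAt v).map (fun t => some t.rootLabel)

/-- Right-hand sides for a synthesized attribute at a symbol (`none` codes `#`,
which has no synthesized rules). -/
def rhsS (A : ATT S I Sg Δ) : Option Sg → S → Set (RHS S I Δ)
  | none, _ => ∅
  | some σ, a => A.ruleS σ a

/-- Right-hand sides for an inherited attribute `b(π i)` at a symbol. -/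
def rhsI (A : ATT S I Sg Δ) : Option Sg → I → ℕ → Set (RHS S I Δ)
  | none, b, i => if i = 1 then A.rootI b else ∅
  | some σ, b, i => A.ruleI σ b i

/-- Instantiation `ξ[π ← v]` of a right-hand side at node `v`. -/
def inst (v : List ℕ) (ξ : RHS S I Δ) : SForm S I Δ :=
  ξ.tmap (fun l => match l with
    | Sum.inl d => Sum.inl d
    | Sum.inr (Sum.inl (a, i)) => Sum.inr (Sum.inl a, v ++ [i])
    | Sum.inr (Sum.inr b) => Sum.inr (Sum.inr b, v))

/-- `t` has at position `p` a leaf labelled by the attribute occurrence `γ(v)`. -/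
def IsAttLeaf (t : SForm S I Δ) (p : List ℕ) (γ : S ⊕ I) (v : List ℕ) : Prop :=
  t.subtreeAt p = some (.node (Sum.inr (γ, v)) [])

/-- The attribute occurrence `γ(v)` occurs in `t`. -/
def Occurs (t : SForm S I Δ) (γ : S ⊕ I) (v : List ℕ) : Prop :=
  ∃ p, IsAttLeaf t p γ v

/-- One derivation step w.r.t. a labelling function `lab`: a leaf labelled `γ(v·i)`
(`i = 0` for synthesized, `i > 0` for inherited attributes) is replaced by an
instantiated right-hand side. -/
def StepL (A : ATT S I Sg Δ) (lab : List ℕ → Option (Option Sg))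
    (t t' : SForm S I Δ) : Prop :=
  ∃ p γ v ξ, IsAttLeaf t p γ v ∧
    ((∃ a l, γ = Sum.inl a ∧ lab v = some l ∧ ξ ∈ A.rhsS l a) ∨
     (∃ b w i l, γ = Sum.inr b ∧ v = w ++ [i] ∧ 1 ≤ i ∧ lab w = some l ∧ ξ ∈ A.rhsI l b i)) ∧
    t' = t.replaceAt p (inst v ξ)

/-- The derivation relation `⇒_{A, #(s)}`. -/
def Step (A : ATT S I Sg Δ) (s : RTree Sg) : SForm S I Δ → SForm S I Δ → Prop :=
  StepL A (labelHash s)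

/-- The derivation relation `⇒_{A, s}` (without root marker). -/
def StepPlain (A : ATT S I Sg Δ) (s : RTree Sg) : SForm S I Δ → SForm S I Δ → Prop :=
  StepL A (labelPlain s)

/-- The sentential form consisting of the single attribute occurrence `γ(v)`. -/
def attForm (γ : S ⊕ I) (v : List ℕ) : SForm S I Δ := .node (Sum.inr (γ, v)) []

/-- The initial sentential form `a₀(1)`. -/
def initForm (A : ATT S I Sg Δ) : SForm S I Δ := attForm (Sum.inl A.init) [1]

/-- Embedding of output trees into sentential forms. -/
def out (t : RTree Δ) : SForm S I Δ := t.tmap Sum.inl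

/-- The translation realized by `A`:
`{(s,t) | a₀(1) ⇒*_{A,#(s)} t}`. -/
def trans (A : ATT S I Sg Δ) : Set (RTree Sg × RTree Δ) :=
  {p | Relation.ReflTransGen (Step A p.1) (initForm A) (out p.2)}

/-- `A` is deterministic: at most one rule per left-hand side. -/
def Deterministic (A : ATT S I Sg Δ) : Prop :=
  (∀ σ a, (A.ruleS σ a).Subsingleton) ∧ (∀ σ b i, (A.ruleI σ b i).Subsingleton) ∧
    (∀ b, (A.rootI b).Subsingleton)

/-- `A` is functional: its translation is a partial function. -/
def Functional (A : ATT S I Sg Δ) : Prop :=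
  ∀ s t₁ t₂, (s, t₁) ∈ A.trans → (s, t₂) ∈ A.trans → t₁ = t₂

/-- `A` has monadic output: every right-hand side is a monadic tree
(all output symbols have rank at most 1). -/
def MonadicOutput (A : ATT S I Sg Δ) : Prop :=
  (∀ σ a ξ, ξ ∈ A.ruleS σ a → RTree.Monadic ξ) ∧
  (∀ σ b i ξ, ξ ∈ A.ruleI σ b i → RTree.Monadic ξ) ∧
  (∀ b ξ, ξ ∈ A.rootI b → RTree.Monadic ξ)

/-- Attribute `a` processes node `v` of the input tree `s`:
some tree derivable from `a₀(1)` contains an occurrence `a(1·v)`. -/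
def Processes (A : ATT S I Sg Δ) (s : RTree Sg) (a : S) (v : List ℕ) : Prop :=
  ∃ t, Relation.ReflTransGen (Step A s) (initForm A) t ∧ Occurs t (Sum.inl a) (1 :: v)

/-- The is-dependency of `s`:
`ISD_A(s) = {(b,a) | a(ε) ⇒*_{A,s} t' and b(ε) occurs in t'}`. -/
def ISD (A : ATT S I Sg Δ) (s : RTree Sg) : Set (I × S) :=
  {q | ∃ t', Relation.ReflTransGen (StepPlain A s) (attForm (Sum.inl q.2) []) t' ∧
        Occurs t' (Sum.inr q.1) []}

/-- The visiting pair set at node `v` of `s`, where `sv = s/v`. -/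
def VisitSet (A : ATT S I Sg Δ) (s sv : RTree Sg) (v : List ℕ) : Set (I × S) :=
  {q | q ∈ A.ISD sv ∧ A.Processes s q.2 v}

/-- `Ω_ψ`: all trees whose is-dependency contains `ψ`. -/
def Omega (A : ATT S I Sg Δ) (ψ : Set (I × S)) : Set (RTree Sg) :=
  {s' | ψ ⊆ A.ISD s'}

/-- `t` is the normal form of `t₀` w.r.t. `⇒_{A,s}` (no root marker). -/
def IsNF (A : ATT S I Sg Δ) (s : RTree Sg) (t₀ t : SForm S I Δ) : Prop :=
  Relation.ReflTransGen (StepPlain A s) t₀ t ∧ ∀ u, ¬ StepPlain A s t u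

/-- `A` is circular: for some input `s`, some attribute occurrence `α(v)` in `#(s)` rewrites
in one or more steps to a tree containing `α(v)` again. -/
def Circular (A : ATT S I Sg Δ) : Prop :=
  ∃ (s : RTree Sg) (γ : S ⊕ I) (v : List ℕ) (t : SForm S I Δ),
    (labelHash s v).isSome ∧ Relation.TransGen (Step A s) (attForm γ v) t ∧ Occurs t γ v

/-- A derivation of `A` on input `s`: a nonempty sequence of sentential forms starting
with `a₀(1)` and chained by `⇒_{A,#(s)}`. -/
def IsDeriv (A : ATT S I Sg Δ) (s : RTree Sg) (ts : List (SForm S I Δ)) : Prop :=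
  ts.head? = some (initForm A) ∧ ts.Chain' (Step A s)

end ATT

/-!
Derivations act on disjoint subtrees independently, so the cycle restricts to a derivation
`γ(ν) ⇒* u` of the leaf itself, and the completion restricts to `u ⇒* z` with `z` the subtree
of the output at `p`. Productivity forces the copy of `γ(ν)` inside `u` to sit at a proper
position `q`; grafting the derivation `γ(ν) ⇒* z` into itself at `q` over and over yields
outputs `z.pump q n` of strictly increasing size, and each of them can be put back into the
context of `t₁` at `p`.
-/

open Relation

namespace RTree

variable {α β : Type u}

theorem size_node (a : α) (ts : List (RTree α)) :
    size (node a ts) = 1 + (ts.map size).sum := by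
  rw [size]
  simp

theorem tmap_node (f : α → β) (a : α) (ts : List (RTree α)) :
    tmap f (node a ts) = node (f a) (ts.map (tmap f)) := by
  rw [tmap]
  simp

theorem subtreeAt_cons (a : α) (ts : List (RTree α)) (i : ℕ) (r : List ℕ) :
    (node a ts).subtreeAt (i :: r) =
      match ts[i - 1]? with
      | some t => if 1 ≤ i then t.subtreeAt r else none
      | none => none := rfl

theorem replaceAt_cons (a : α) (ts : List (RTree α)) (i : ℕ) (r : List ℕ) (x : RTree α) :
    (node a ts).replaceAt (i :: r) x =
      node a (ts.set (i - 1)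
        (match ts[i - 1]? with
         | some t => t.replaceAt r x
         | none => node a [])) := rfl

theorem exists_of_subtreeAt_cons_eq_some {a : α} {ts : List (RTree α)} {i : ℕ}
    {r : List ℕ} {w : RTree α} (h : (node a ts).subtreeAt (i :: r) = some w) :
    ∃ t, ts[i - 1]? = some t ∧ 1 ≤ i ∧ t.subtreeAt r = some w := by
  rw [subtreeAt_cons] at h
  split at h
  · split_ifs at h with hi
    exact ⟨_, ‹_›, hi, h⟩
  · cases h

theorem subtreeAt_append (r r' : List ℕ) (t : RTree α) :
    t.subtreeAt (r ++ r') = (t.subtreeAt r).bind (·.subtreeAt r') := by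
  induction r generalizing t with
  | nil => rfl
  | cons i r ih =>
    obtain ⟨a, ts⟩ := t
    rw [List.cons_append, subtreeAt_cons, subtreeAt_cons]
    split
    · split_ifs
      · exact ih _
      · rfl
    · rfl

theorem subtreeAt_replaceAt {r : List ℕ} {t w : RTree α} (h : t.subtreeAt r = some w)
    (x : RTree α) : (t.replaceAt r x).subtreeAt r = some x := by
  induction r generalizing t with
  | nil => rfl
  | cons i r ih =>
    obtain ⟨a, ts⟩ := t
    obtain ⟨t₀, ht₀, hi, hr⟩ := exists_of_subtreeAt_cons_eq_some h
    have hlt := (List.getElem?_eq_some_iff.mp ht₀).1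
    simp only [replaceAt_cons, subtreeAt_cons, ht₀, List.getElem?_set_self hlt, if_pos hi]
    exact ih hr

theorem subtreeAt_replaceAt_of_not_prefix {r r' : List ℕ} (hrr' : ¬ r <+: r')
    (hr'r : ¬ r' <+: r) {t w w' : RTree α} (h : t.subtreeAt r = some w)
    (h' : t.subtreeAt r' = some w') (x : RTree α) :
    (t.replaceAt r x).subtreeAt r' = some w' := by
  induction r generalizing r' t with
  | nil => exact absurd List.nil_prefix hrr'
  | cons i r ih =>
    obtain _ | ⟨j, r'⟩ := r'
    · exact absurd List.nil_prefix hr'r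
    obtain ⟨a, ts⟩ := t
    obtain ⟨t₀, ht₀, hi, hr⟩ := exists_of_subtreeAt_cons_eq_some h
    obtain ⟨t₀', ht₀', hj, hr'⟩ := exists_of_subtreeAt_cons_eq_some h'
    by_cases hij : i = j
    · subst hij
      obtain rfl : t₀' = t₀ := Option.some.inj (ht₀'.symm.trans ht₀)
      have hlt := (List.getElem?_eq_some_iff.mp ht₀).1
      simp only [List.cons_prefix_cons, true_and] at hrr' hr'r
      simp only [replaceAt_cons, subtreeAt_cons, ht₀, List.getElem?_set_self hlt, if_pos hi]
      exact ih hrr' hr'r hr hr'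
    · have hne : i - 1 ≠ j - 1 := by omega
      simp only [replaceAt_cons, subtreeAt_cons, List.getElem?_set_ne hne, ht₀', if_pos hj]
      exact hr'

theorem replaceAt_injective {r : List ℕ} {t w : RTree α} (h : t.subtreeAt r = some w) :
    Function.Injective (t.replaceAt r) := fun x y hxy =>
  Option.some.inj <| (subtreeAt_replaceAt h x).symm.trans <|
    (congrArg (·.subtreeAt r) hxy).trans (subtreeAt_replaceAt h y)

theorem replaceAt_append {r : List ℕ} {t w : RTree α} (h : t.subtreeAt r = some w)
    (ρ : List ℕ) (x : RTree α) :
    t.replaceAt (r ++ ρ) x = t.replaceAt r (w.replaceAt ρ x) := by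
  induction r generalizing t with
  | nil => cases h; rfl
  | cons i r ih =>
    obtain ⟨a, ts⟩ := t
    obtain ⟨t₀, ht₀, -, hr⟩ := exists_of_subtreeAt_cons_eq_some h
    simp only [List.cons_append, replaceAt_cons, ht₀, ih hr]

theorem replaceAt_replaceAt {r : List ℕ} {t w : RTree α} (h : t.subtreeAt r = some w)
    (x y : RTree α) : (t.replaceAt r x).replaceAt r y = t.replaceAt r y := by
  induction r generalizing t with
  | nil => rfl
  | cons i r ih =>
    obtain ⟨a, ts⟩ := t
    obtain ⟨t₀, ht₀, -, hr⟩ := exists_of_subtreeAt_cons_eq_some h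
    have hlt := (List.getElem?_eq_some_iff.mp ht₀).1
    simp only [replaceAt_cons, ht₀, List.getElem?_set_self hlt, List.set_set, ih hr]

theorem replaceAt_self {r : List ℕ} {t w : RTree α} (h : t.subtreeAt r = some w) :
    t.replaceAt r w = t := by
  induction r generalizing t with
  | nil => cases h; rfl
  | cons i r ih =>
    obtain ⟨a, ts⟩ := t
    obtain ⟨t₀, ht₀, -, hr⟩ := exists_of_subtreeAt_cons_eq_some h
    obtain ⟨hlt, rfl⟩ := List.getElem?_eq_some_iff.mp ht₀
    simp only [replaceAt_cons, ht₀, ih hr, List.set_getElem_self hlt]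

theorem replaceAt_comm {r r' : List ℕ} (hrr' : ¬ r <+: r') (hr'r : ¬ r' <+: r)
    {t w w' : RTree α} (h : t.subtreeAt r = some w) (h' : t.subtreeAt r' = some w')
    (x y : RTree α) :
    (t.replaceAt r x).replaceAt r' y = (t.replaceAt r' y).replaceAt r x := by
  induction r generalizing r' t with
  | nil => exact absurd List.nil_prefix hrr'
  | cons i r ih =>
    obtain _ | ⟨j, r'⟩ := r'
    · exact absurd List.nil_prefix hr'r
    obtain ⟨a, ts⟩ := t
    obtain ⟨t₀, ht₀, hi, hr⟩ := exists_of_subtreeAt_cons_eq_some h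
    obtain ⟨t₀', ht₀', hj, hr'⟩ := exists_of_subtreeAt_cons_eq_some h'
    by_cases hij : i = j
    · subst hij
      obtain rfl : t₀' = t₀ := Option.some.inj (ht₀'.symm.trans ht₀)
      have hlt := (List.getElem?_eq_some_iff.mp ht₀).1
      simp only [List.cons_prefix_cons, true_and] at hrr' hr'r
      simp only [replaceAt_cons, ht₀, List.getElem?_set_self hlt, List.set_set,
        ih hrr' hr'r hr hr']
    · have hne : i - 1 ≠ j - 1 := by omega
      simp only [replaceAt_cons, ht₀, ht₀', List.getElem?_set_ne hne,
        List.getElem?_set_ne hne.symm, List.set_comm _ _ hne]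

theorem size_subtreeAt_le {r : List ℕ} {t w : RTree α} (h : t.subtreeAt r = some w) :
    size w ≤ size t := by
  induction r generalizing t with
  | nil => cases h; rfl
  | cons i r ih =>
    obtain ⟨a, ts⟩ := t
    obtain ⟨t₀, ht₀, -, hr⟩ := exists_of_subtreeAt_cons_eq_some h
    have hmem : size t₀ ∈ ts.map size := List.mem_map_of_mem (List.mem_of_getElem? ht₀)
    have := List.le_sum_of_mem hmem
    rw [size_node]
    have := ih hr
    omega

theorem size_subtreeAt_lt {r : List ℕ} {t w : RTree α} (h : t.subtreeAt r = some w)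
    (hr : r ≠ []) : size w < size t := by
  obtain _ | ⟨i, r⟩ := r
  · exact absurd rfl hr
  obtain ⟨a, ts⟩ := t
  obtain ⟨t₀, ht₀, -, hr⟩ := exists_of_subtreeAt_cons_eq_some h
  have hmem : size t₀ ∈ ts.map size := List.mem_map_of_mem (List.mem_of_getElem? ht₀)
  have := List.le_sum_of_mem hmem
  have := size_subtreeAt_le hr
  rw [size_node]
  omega

theorem size_lt_size_replaceAt {r : List ℕ} {t w : RTree α} (h : t.subtreeAt r = some w)
    (hr : r ≠ []) (x : RTree α) : size x < size (t.replaceAt r x) :=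
  size_subtreeAt_lt (subtreeAt_replaceAt h x) hr

theorem subtreeAt_tmap (f : α → β) (r : List ℕ) (t : RTree α) :
    (tmap f t).subtreeAt r = (t.subtreeAt r).map (tmap f) := by
  induction r generalizing t with
  | nil => rfl
  | cons i r ih =>
    obtain ⟨a, ts⟩ := t
    rw [tmap_node, subtreeAt_cons, subtreeAt_cons, List.getElem?_map]
    cases ts[i - 1]? with
    | none => rfl
    | some t₀ =>
      split_ifs
      · exact ih t₀
      · rfl

theorem tmap_replaceAt (f : α → β) (r : List ℕ) (t x : RTree α) :
    tmap f (t.replaceAt r x) = (tmap f t).replaceAt r (tmap f x) := by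
  induction r generalizing t with
  | nil => rfl
  | cons i r ih =>
    obtain ⟨a, ts⟩ := t
    rw [replaceAt_cons, tmap_node, tmap_node, replaceAt_cons, List.getElem?_map, List.map_set]
    cases ts[i - 1]? with
    | none => simp only [Option.map_none, tmap_node, List.map_nil]
    | some t₀ => simp only [Option.map_some, ih]

def pump (z : RTree α) (q : List ℕ) : ℕ → RTree α
  | 0 => z
  | n + 1 => z.replaceAt q (z.pump q n)

theorem strictMono_size_pump {z w : RTree α} {q : List ℕ} (hq : z.subtreeAt q = some w)
    (hq_ne : q ≠ []) : StrictMono fun n => size (z.pump q n) :=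
  strictMono_nat_of_lt_succ fun n => size_lt_size_replaceAt hq hq_ne (z.pump q n)

end RTree

namespace ATT

variable {S I Sg Δ : Type} {A : ATT S I Sg Δ} {lab : List ℕ → Option (Option Sg)}

theorem subtreeAt_out (t : RTree Δ) (r : List ℕ) :
    (out t : SForm S I Δ).subtreeAt r = (t.subtreeAt r).map out :=
  RTree.subtreeAt_tmap _ r t

theorem out_replaceAt (t x : RTree Δ) (r : List ℕ) :
    (out (t.replaceAt r x) : SForm S I Δ) = (out t).replaceAt r (out x) :=
  RTree.tmap_replaceAt _ r t x

theorem stepL_replaceAt {t w w' : SForm S I Δ} {r : List ℕ} (h : t.subtreeAt r = some w)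
    (hstep : StepL A lab w w') : StepL A lab t (t.replaceAt r w') := by
  obtain ⟨p, γ, v, ξ, hleaf, hrule, rfl⟩ := hstep
  refine ⟨r ++ p, γ, v, ξ, ?_, hrule, (RTree.replaceAt_append h p _).symm⟩
  rw [IsAttLeaf, RTree.subtreeAt_append, h, Option.bind_some]
  exact hleaf

theorem reflTransGen_stepL_replaceAt {t w w' : SForm S I Δ} {r : List ℕ}
    (h : t.subtreeAt r = some w) (hd : ReflTransGen (StepL A lab) w w') :
    ReflTransGen (StepL A lab) t (t.replaceAt r w') := by
  induction hd with
  | refl => rw [RTree.replaceAt_self h]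
  | tail _ hstep ih =>
    have := stepL_replaceAt (RTree.subtreeAt_replaceAt h _) hstep
    rw [RTree.replaceAt_replaceAt h] at this
    exact ih.tail this

/-- The rewritten leaf cannot lie strictly above `r`, since a leaf has no proper subtrees. -/
theorem stepL_inside_or_outside {t t' w : SForm S I Δ} (hstep : StepL A lab t t')
    {r : List ℕ} (h : t.subtreeAt r = some w) :
    (∃ w', StepL A lab w w' ∧ t'.subtreeAt r = some w' ∧
      ∀ x, t'.replaceAt r x = t.replaceAt r x) ∨
    (t'.subtreeAt r = some w ∧ ∀ x, StepL A lab (t.replaceAt r x) (t'.replaceAt r x)) := by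
  obtain ⟨p, γ, v, ξ, hleaf, hrule, rfl⟩ := hstep
  by_cases hrp : r <+: p
  · obtain ⟨ρ, rfl⟩ := hrp
    have hleaf' : IsAttLeaf w ρ γ v := by
      rwa [IsAttLeaf, RTree.subtreeAt_append, h, Option.bind_some] at hleaf
    refine .inl ⟨_, ⟨ρ, γ, v, ξ, hleaf', hrule, rfl⟩, ?_, fun x => ?_⟩
    · rw [RTree.replaceAt_append h]
      exact RTree.subtreeAt_replaceAt h _
    · rw [RTree.replaceAt_append h, RTree.replaceAt_replaceAt h]
  by_cases hpr : p <+: r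
  · obtain ⟨_ | ⟨k, ρ⟩, rfl⟩ := hpr
    · simp at hrp
    · rw [RTree.subtreeAt_append, hleaf, Option.bind_some, RTree.subtreeAt_cons] at h
      simp at h
  refine .inr ⟨RTree.subtreeAt_replaceAt_of_not_prefix hpr hrp hleaf h _, fun x => ?_⟩
  refine ⟨p, γ, v, ξ, RTree.subtreeAt_replaceAt_of_not_prefix hrp hpr h hleaf x, hrule, ?_⟩
  exact RTree.replaceAt_comm hpr hrp hleaf h _ _

theorem exists_reflTransGen_stepL_subtreeAt {t t' w : SForm S I Δ}
    (hd : ReflTransGen (StepL A lab) t t') {r : List ℕ} (h : t.subtreeAt r = some w) :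
    ∃ w', ReflTransGen (StepL A lab) w w' ∧ t'.subtreeAt r = some w' := by
  induction hd with
  | refl => exact ⟨w, .refl, h⟩
  | tail _ hstep ih =>
    obtain ⟨w₁, hw₁, hr⟩ := ih
    rcases stepL_inside_or_outside hstep hr with ⟨w₂, hw₂, hr', -⟩ | ⟨hr', -⟩
    · exact ⟨w₂, hw₁.tail hw₂, hr'⟩
    · exact ⟨w₁, hw₁, hr'⟩

theorem reflTransGen_stepL_replaceAt_context {t t' w : SForm S I Δ}
    (hd : ReflTransGen (StepL A lab) t t') {r : List ℕ} (h : t.subtreeAt r = some w)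
    (x : SForm S I Δ) :
    ReflTransGen (StepL A lab) (t.replaceAt r x) (t'.replaceAt r x) := by
  induction hd with
  | refl => exact .refl
  | tail hd' hstep ih =>
    obtain ⟨w₁, -, hr⟩ := exists_reflTransGen_stepL_subtreeAt hd' h
    rcases stepL_inside_or_outside hstep hr with ⟨-, -, -, heq⟩ | ⟨-, hstep'⟩
    · rw [heq]
      exact ih
    · exact ih.tail (hstep' x)

theorem exists_reflTransGen_stepL_out_subtreeAt {t w : SForm S I Δ} {z : RTree Δ}
    (hd : ReflTransGen (StepL A lab) t (out z)) {r : List ℕ} (h : t.subtreeAt r = some w) :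
    ∃ z', ReflTransGen (StepL A lab) w (out z') ∧ z.subtreeAt r = some z' := by
  obtain ⟨w', hw', hr⟩ := exists_reflTransGen_stepL_subtreeAt hd h
  rw [subtreeAt_out, Option.map_eq_some_iff] at hr
  obtain ⟨z', hz', rfl⟩ := hr
  exact ⟨z', hw', hz'⟩

theorem reflTransGen_stepL_out_replaceAt {t w : SForm S I Δ} {z z' : RTree Δ}
    (hd : ReflTransGen (StepL A lab) t (out z)) {r : List ℕ} (h : t.subtreeAt r = some w)
    (hw : ReflTransGen (StepL A lab) w (out z')) :
    ReflTransGen (StepL A lab) t (out (z.replaceAt r z')) := by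
  rw [out_replaceAt]
  exact (reflTransGen_stepL_replaceAt h hw).trans
    (reflTransGen_stepL_replaceAt_context hd h _)

theorem reflTransGen_stepL_out_pump {x u : SForm S I Δ} {q : List ℕ} {z : RTree Δ}
    (hxu : ReflTransGen (StepL A lab) x u) (hq : u.subtreeAt q = some x)
    (huz : ReflTransGen (StepL A lab) u (out z)) (n : ℕ) :
    ReflTransGen (StepL A lab) x (out (z.pump q n)) := by
  induction n with
  | zero => exact hxu.trans huz
  | succ n ih => exact hxu.trans (reflTransGen_stepL_out_replaceAt huz hq ih)

theorem not_functional_of_infinite {s : RTree Sg}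
    (h : Set.Infinite {t : RTree Δ | (s, t) ∈ A.trans}) : ¬ A.Functional := by
  intro hA
  obtain ⟨t₁, ht₁, t₂, ht₂, hne⟩ := h.nontrivial
  exact hne (hA s t₁ t₂ ht₁ ht₂)

end ATT

theorem productive_cycle_infinite_outputs_general {S I Sg D : Type}
    (A : ATT S I Sg D) (s : RTree Sg)
    (t₁ : SForm S I D) (p : List ℕ) (γ : S ⊕ I) (ν : List ℕ) (u : SForm S I D)
    (tout : RTree D)
    (hreach : Relation.ReflTransGen (ATT.Step A s) (ATT.initForm A) t₁)
    (hocc : ATT.IsAttLeaf t₁ p γ ν)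
    (hcyc : Relation.ReflTransGen (ATT.Step A s) t₁ (t₁.replaceAt p u))
    (hne : t₁.replaceAt p u ≠ t₁)
    (hocc' : ∃ q, ATT.IsAttLeaf u q γ ν)
    (hcomplete : Relation.ReflTransGen (ATT.Step A s) (t₁.replaceAt p u) (ATT.out tout)) :
    Set.Infinite {t : RTree D | (s, t) ∈ A.trans} ∧ ¬ A.Functional := by
  obtain ⟨q, hq⟩ := hocc'
  have hup : (t₁.replaceAt p u).subtreeAt p = some u := RTree.subtreeAt_replaceAt hocc u
  have hxu : ReflTransGen (ATT.Step A s) (ATT.attForm γ ν) u := by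
    obtain ⟨u', hu', hup'⟩ := ATT.exists_reflTransGen_stepL_subtreeAt hcyc hocc
    rwa [Option.some.inj (hup.symm.trans hup')]
  obtain ⟨z, huz, hz⟩ := ATT.exists_reflTransGen_stepL_out_subtreeAt hcomplete hup
  have hq_ne : q ≠ [] := by
    rintro rfl
    cases hq
    exact hne (RTree.replaceAt_self hocc)
  obtain ⟨y, -, hzq⟩ := ATT.exists_reflTransGen_stepL_out_subtreeAt huz hq
  have hmem (n : ℕ) : tout.replaceAt p (z.pump q n) ∈ {t | (s, t) ∈ A.trans} :=
    hreach.trans <| ATT.reflTransGen_stepL_out_replaceAt (hcyc.trans hcomplete) hocc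
      (ATT.reflTransGen_stepL_out_pump hxu hq huz n)
  have hinj : Function.Injective fun n => tout.replaceAt p (z.pump q n) :=
    (RTree.replaceAt_injective hz).comp
      (RTree.strictMono_size_pump hzq hq_ne).injective.of_comp
  have hinf := Set.infinite_of_injective_forall_mem hinj hmem
  exact ⟨hinf, ATT.not_functional_of_infinite hinf⟩

/-- If a derivation of `A` on input `s` contains a productive cycle — a reachable sentential
form `t₁` with an attribute occurrence `γ(ν)` at position `p`, such that `t₁` rewrites (only
at positions below `p`) to `t₂ = t₁[p ← u]` with `t₂ ≠ t₁`, `γ(ν)` still occurring in `u`,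
and the rewriting strictly grows the tree, and the derivation can be completed to an output
tree — then by pumping `A` produces infinitely many distinct output trees on input `s`;
hence `A` is not functional. -/
theorem productive_cycle_infinite_outputs {S I Sg D : Type}
    (A : ATT S I Sg D) (s : RTree Sg)
    (t₁ : SForm S I D) (p : List ℕ) (γ : S ⊕ I) (ν : List ℕ) (u : SForm S I D)
    (tout : RTree D)
    (hreach : Relation.ReflTransGen (ATT.Step A s) (ATT.initForm A) t₁)
    (hocc : ATT.IsAttLeaf t₁ p γ ν)
    (hcyc : Relation.ReflTransGen (ATT.Step A s) t₁ (t₁.replaceAt p u))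
    (hne : t₁.replaceAt p u ≠ t₁)
    (hocc' : ∃ q, ATT.IsAttLeaf u q γ ν)
    (hgrow : RTree.size t₁ < RTree.size (t₁.replaceAt p u))
    (hcomplete : Relation.ReflTransGen (ATT.Step A s) (t₁.replaceAt p u) (ATT.out tout)) :
    Set.Infinite {t : RTree D | (s, t) ∈ A.trans} ∧ ¬ A.Functional :=
  productive_cycle_infinite_outputs_general A s t₁ p γ ν u tout hreach hocc hcyc hne hocc' hcomplete
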